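/- Given an exact sequence of inverse systems of abelian groups over ℕ, 0 → (A_n) → (B_n) → (C_n) → 0 (exact at each level, with compatible bonding maps), there is a six-term exact sequence 0 → lim A_n → lim B_n → lim C_n → lim¹ A_n → lim¹ B_n → lim¹ C_n → 0. -/

import Mathlib

/-!
Levelwise exactness makes `0 → ∏ A → ∏ B → ∏ C → 0` exact, and the shifted-difference maps
`d_A, d_B, d_C` commute with it. The snake lemma for the vertical maps `d` then gives the six-term
sequence, since `ker d = lim` and `coker d = lim¹`.
-/

/-- The inverse limit of an inverse system of abelian groups over `ℕ`, as a subgroup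
of the product. -/
def InvLim (G : ℕ → Type) [∀ n, AddCommGroup (G n)] (f : ∀ n, G (n + 1) →+ G n) :
    AddSubgroup (∀ n, G n) where
  carrier := {g | ∀ n, f n (g (n + 1)) = g n}
  add_mem' {g} {h} hg hh := fun n => by simp [map_add, hg n, hh n]
  zero_mem' := fun n => by simp
  neg_mem' {g} hg := fun n => by simp [hg n]

/-- The shifted-difference map `(g_n) ↦ (g_n - f_n (g_{n+1}))` whose kernel is `lim`
and whose cokernel is `lim¹`. -/
def limD (G : ℕ → Type) [∀ n, AddCommGroup (G n)] (f : ∀ n, G (n + 1) →+ G n) :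
    (∀ n, G n) →+ (∀ n, G n) :=
  AddMonoidHom.mk' (fun g n => g n - f n (g (n + 1))) (by
    intro g h
    funext n
    simp [map_add]
    abel)

/-- `lim¹` of an inverse system of abelian groups over `ℕ`: the cokernel of the
shifted-difference map. -/
abbrev InvLim1 (G : ℕ → Type) [∀ n, AddCommGroup (G n)] (f : ∀ n, G (n + 1) →+ G n) :=
  (∀ n, G n) ⧸ (limD G f).range

open Function

section Pi

variable {ι : Type*} {M N P : ι → Type*} [∀ j, AddCommGroup (M j)] [∀ j, AddCommGroup (N j)]
  [∀ j, AddCommGroup (P j)]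

theorem AddMonoidHom.piMap_injective {φ : ∀ j, M j →+ N j} (h : ∀ j, Injective (φ j)) :
    Injective (AddMonoidHom.piMap φ) :=
  Injective.piMap h

theorem AddMonoidHom.piMap_surjective {φ : ∀ j, M j →+ N j} (h : ∀ j, Surjective (φ j)) :
    Surjective (AddMonoidHom.piMap φ) :=
  Surjective.piMap h

theorem Function.Exact.piMap {φ : ∀ j, M j →+ N j} {ψ : ∀ j, N j →+ P j}
    (h : ∀ j, Exact (φ j) (ψ j)) : Exact (AddMonoidHom.piMap φ) (AddMonoidHom.piMap ψ) := by
  intro y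
  simp only [funext_iff, AddMonoidHom.piMap_apply, Pi.zero_apply, h _ _, Set.mem_range]
  exact ⟨fun hy => ⟨fun j => (hy j).choose, fun j => (hy j).choose_spec⟩,
    fun ⟨x, hx⟩ j => ⟨x j, hx j⟩⟩

end Pi

theorem QuotientAddGroup.exact_mk'_range {M N : Type*} [AddCommGroup M] [AddCommGroup N]
    (φ : M →+ N) : Exact φ (QuotientAddGroup.mk' φ.range) := fun y => by
  simp [QuotientAddGroup.eq_zero_iff]

variable {G H : ℕ → Type} [∀ n, AddCommGroup (G n)] [∀ n, AddCommGroup (H n)]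
  {f : ∀ n, G (n + 1) →+ G n} {f' : ∀ n, H (n + 1) →+ H n}

lemma limD_apply (g : ∀ n, G n) (n : ℕ) : limD G f g n = g n - f n (g (n + 1)) := rfl

lemma mem_invLim_iff_limD_eq_zero {g : ∀ n, G n} : g ∈ InvLim G f ↔ limD G f g = 0 := by
  simp only [funext_iff, limD_apply, Pi.zero_apply, sub_eq_zero]
  exact ⟨fun h n => (h n).symm, fun h n => (h n).symm⟩

lemma exact_subtype_limD : Exact (InvLim G f).subtype (limD G f) := fun g => by
  simp [mem_invLim_iff_limD_eq_zero]

lemma limD_piMap {φ : ∀ n, G n →+ H n} (hφ : ∀ n x, φ n (f n x) = f' n (φ (n + 1) x))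
    (g : ∀ n, G n) : limD H f' (AddMonoidHom.piMap φ g) = AddMonoidHom.piMap φ (limD G f g) := by
  funext n
  simp [limD_apply, hφ]

namespace InvLim

def map (φ : ∀ n, G n →+ H n) (hφ : ∀ n x, φ n (f n x) = f' n (φ (n + 1) x)) :
    InvLim G f →+ InvLim H f' :=
  ((AddMonoidHom.piMap φ).comp (InvLim G f).subtype).codRestrict _ fun g n => by
    simp [← hφ, g.2 n]

theorem map_injective {φ : ∀ n, G n →+ H n} (hφ : ∀ n x, φ n (f n x) = f' n (φ (n + 1) x))
    (hinj : ∀ n, Injective (φ n)) : Injective (map φ hφ) := fun _ _ h =>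
  Subtype.ext <| AddMonoidHom.piMap_injective hinj <| congrArg Subtype.val h

end InvLim

namespace InvLim1

def map (φ : ∀ n, G n →+ H n) (hφ : ∀ n x, φ n (f n x) = f' n (φ (n + 1) x)) :
    InvLim1 G f →+ InvLim1 H f' :=
  QuotientAddGroup.map _ _ (AddMonoidHom.piMap φ) <| by
    rintro _ ⟨g, rfl⟩
    exact ⟨AddMonoidHom.piMap φ g, limD_piMap hφ g⟩

@[simp]
lemma map_mk (φ : ∀ n, G n →+ H n) (hφ : ∀ n x, φ n (f n x) = f' n (φ (n + 1) x))
    (g : ∀ n, G n) :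
    map φ hφ (QuotientAddGroup.mk g) = QuotientAddGroup.mk (AddMonoidHom.piMap φ g) :=
  rfl

theorem map_surjective {φ : ∀ n, G n →+ H n} (hφ : ∀ n x, φ n (f n x) = f' n (φ (n + 1) x))
    (hsurj : ∀ n, Surjective (φ n)) : Surjective (map φ hφ) := by
  intro q
  obtain ⟨z, rfl⟩ := QuotientAddGroup.mk_surjective q
  obtain ⟨w, rfl⟩ := AddMonoidHom.piMap_surjective hsurj z
  exact ⟨QuotientAddGroup.mk w, rfl⟩

end InvLim1

section ShortExact

variable {A B C : ℕ → Type} [∀ n, AddCommGroup (A n)] [∀ n, AddCommGroup (B n)]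
  [∀ n, AddCommGroup (C n)] {a : ∀ n, A (n + 1) →+ A n} {b : ∀ n, B (n + 1) →+ B n}
  {c : ∀ n, C (n + 1) →+ C n} {i : ∀ n, A n →+ B n} {p : ∀ n, B n →+ C n}

namespace InvLim

/-- Mathlib's snake lemma is stated for modules, so the groups enter it as `ℤ`-modules. -/
noncomputable def δ (hia : ∀ n x, i n (a n x) = b n (i (n + 1) x))
    (hpb : ∀ n x, p n (b n x) = c n (p (n + 1) x)) (hinj : ∀ n, Injective (i n))
    (hsurj : ∀ n, Surjective (p n)) (hexact : ∀ n, Exact (i n) (p n)) :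
    InvLim C c →+ InvLim1 A a :=
  (SnakeLemma.δ' (limD A a).toIntLinearMap (limD B b).toIntLinearMap (limD C c).toIntLinearMap
    (AddMonoidHom.piMap i).toIntLinearMap (AddMonoidHom.piMap p).toIntLinearMap
    (Exact.piMap hexact)
    (AddMonoidHom.piMap i).toIntLinearMap (AddMonoidHom.piMap p).toIntLinearMap
    (Exact.piMap hexact)
    (LinearMap.ext fun x => (limD_piMap hia x).symm)
    (LinearMap.ext fun x => (limD_piMap hpb x).symm)
    (InvLim C c).subtype.toIntLinearMap exact_subtype_limD
    (QuotientAddGroup.mk' (limD A a).range).toIntLinearMap (QuotientAddGroup.exact_mk'_range _)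
    (AddMonoidHom.piMap_surjective hsurj) (AddMonoidHom.piMap_injective hinj)).toAddMonoidHom

theorem exact_map (hia : ∀ n x, i n (a n x) = b n (i (n + 1) x))
    (hpb : ∀ n x, p n (b n x) = c n (p (n + 1) x)) (hinj : ∀ n, Injective (i n))
    (hexact : ∀ n, Exact (i n) (p n)) : Exact (map i hia) (map p hpb) := by
  intro y
  constructor
  · intro hy
    obtain ⟨x, hx⟩ := (Exact.piMap hexact y.1).mp (congrArg Subtype.val hy)
    have hxlim : x ∈ InvLim A a := by
      refine mem_invLim_iff_limD_eq_zero.mpr (AddMonoidHom.piMap_injective hinj ?_)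
      rw [← limD_piMap hia, hx, mem_invLim_iff_limD_eq_zero.mp y.2, map_zero]
    exact ⟨⟨x, hxlim⟩, Subtype.ext hx⟩
  · rintro ⟨x, rfl⟩
    exact Subtype.ext <| (Exact.piMap hexact).apply_apply_eq_zero x.1

theorem exact_map_δ (hia : ∀ n x, i n (a n x) = b n (i (n + 1) x))
    (hpb : ∀ n x, p n (b n x) = c n (p (n + 1) x)) (hinj : ∀ n, Injective (i n))
    (hsurj : ∀ n, Surjective (p n)) (hexact : ∀ n, Exact (i n) (p n)) :
    Exact (map p hpb) (δ hia hpb hinj hsurj hexact) := by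
  rw [δ, LinearMap.toAddMonoidHom_coe, ← AddMonoidHom.coe_toIntLinearMap (map p hpb)]
  apply SnakeLemma.exact_δ'_right (ι₂ := (InvLim B b).subtype.toIntLinearMap)
    (F := (map p hpb).toIntLinearMap)
  exacts [exact_subtype_limD, LinearMap.ext fun _ => rfl, Subtype.val_injective]

end InvLim

namespace InvLim1

theorem exact_δ_map (hia : ∀ n x, i n (a n x) = b n (i (n + 1) x))
    (hpb : ∀ n x, p n (b n x) = c n (p (n + 1) x)) (hinj : ∀ n, Injective (i n))
    (hsurj : ∀ n, Surjective (p n)) (hexact : ∀ n, Exact (i n) (p n)) :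
    Exact (InvLim.δ hia hpb hinj hsurj hexact) (map i hia) := by
  rw [InvLim.δ, LinearMap.toAddMonoidHom_coe, ← AddMonoidHom.coe_toIntLinearMap (map i hia)]
  apply SnakeLemma.exact_δ'_left (π₂ := (QuotientAddGroup.mk' (limD B b).range).toIntLinearMap)
    (G := (map i hia).toIntLinearMap)
  exacts [QuotientAddGroup.exact_mk'_range _, LinearMap.ext fun _ => rfl,
    QuotientAddGroup.mk'_surjective _]

theorem exact_map (hia : ∀ n x, i n (a n x) = b n (i (n + 1) x))
    (hpb : ∀ n x, p n (b n x) = c n (p (n + 1) x)) (hsurj : ∀ n, Surjective (p n))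
    (hexact : ∀ n, Exact (i n) (p n)) : Exact (map i hia) (map p hpb) := by
  intro q
  obtain ⟨y, rfl⟩ := QuotientAddGroup.mk_surjective q
  constructor
  · intro hy
    obtain ⟨z, hz⟩ := (QuotientAddGroup.eq_zero_iff _).mp hy
    obtain ⟨w, rfl⟩ := AddMonoidHom.piMap_surjective hsurj z
    obtain ⟨x, hx⟩ : y - limD B b w ∈ Set.range (AddMonoidHom.piMap i) := by
      refine (Exact.piMap hexact _).mp ?_
      rw [map_sub, ← limD_piMap hpb, hz, sub_self]
    refine ⟨QuotientAddGroup.mk x, ?_⟩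
    have hw : (QuotientAddGroup.mk (limD B b w) : InvLim1 B b) = 0 :=
      (QuotientAddGroup.eq_zero_iff _).mpr (AddMonoidHom.mem_range.mpr ⟨w, rfl⟩)
    rw [map_mk, hx, QuotientAddGroup.mk_sub, hw, sub_zero]
  · rintro ⟨x, hx⟩
    obtain ⟨x, rfl⟩ := QuotientAddGroup.mk_surjective x
    rw [← hx, map_mk, map_mk, (Exact.piMap hexact).apply_apply_eq_zero, QuotientAddGroup.mk_zero]

end InvLim1

end ShortExact

/-- Given a levelwise short exact sequence of inverse systems of abelian groups
over `ℕ` (with compatible bonding maps), there is a six-term exact sequence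
`0 → lim A → lim B → lim C → lim¹ A → lim¹ B → lim¹ C → 0`, where the maps between
the `lim`s and the `lim¹`s are the ones induced by the levelwise maps. -/
theorem stmt_12 (A B C : ℕ → Type)
    [∀ n, AddCommGroup (A n)] [∀ n, AddCommGroup (B n)] [∀ n, AddCommGroup (C n)]
    (a : ∀ n, A (n + 1) →+ A n) (b : ∀ n, B (n + 1) →+ B n) (c : ∀ n, C (n + 1) →+ C n)
    (i : ∀ n, A n →+ B n) (p : ∀ n, B n →+ C n)
    (hia : ∀ n x, i n (a n x) = b n (i (n + 1) x))
    (hpb : ∀ n x, p n (b n x) = c n (p (n + 1) x))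
    (hinj : ∀ n, Function.Injective (i n))
    (hsurj : ∀ n, Function.Surjective (p n))
    (hexact : ∀ n, Function.Exact (i n) (p n)) :
    ∃ (F1 : InvLim A a →+ InvLim B b) (F2 : InvLim B b →+ InvLim C c)
      (F3 : InvLim C c →+ InvLim1 A a) (F4 : InvLim1 A a →+ InvLim1 B b)
      (F5 : InvLim1 B b →+ InvLim1 C c),
      (∀ g n, ((F1 g : ∀ n, B n) n) = i n ((g : ∀ n, A n) n)) ∧
      (∀ g n, ((F2 g : ∀ n, C n) n) = p n ((g : ∀ n, B n) n)) ∧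
      (∀ x : ∀ n, A n,
        F4 (QuotientAddGroup.mk x) = QuotientAddGroup.mk (fun n => i n (x n))) ∧
      (∀ x : ∀ n, B n,
        F5 (QuotientAddGroup.mk x) = QuotientAddGroup.mk (fun n => p n (x n))) ∧
      Function.Injective F1 ∧
      Function.Exact F1 F2 ∧ Function.Exact F2 F3 ∧ Function.Exact F3 F4 ∧
      Function.Exact F4 F5 ∧
      Function.Surjective F5 :=
  ⟨InvLim.map i hia, InvLim.map p hpb, InvLim.δ hia hpb hinj hsurj hexact, InvLim1.map i hia,
    InvLim1.map p hpb, fun _ _ => rfl, fun _ _ => rfl, fun _ => rfl, fun _ => rfl,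
    InvLim.map_injective hia hinj, InvLim.exact_map hia hpb hinj hexact,
    InvLim.exact_map_δ hia hpb hinj hsurj hexact, InvLim1.exact_δ_map hia hpb hinj hsurj hexact,
    InvLim1.exact_map hia hpb hsurj hexact, InvLim1.map_surjective hpb hsurj⟩
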